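/- arXiv:1804.09847 — 4 statements merged into one kernel-verified Lean document; each statement's English description precedes it below -/
import Mathlib

section
/- Let F be a monic polynomial and χ a non-trivial Dirichlet character modulo F on F_q[T]. Assuming the bound Σ_{deg P = k} χ(P) ≪ (q^{k/2}/k)·deg F for the character sum over monic irreducibles of degree k, we have for any positive integer M and any complex s with Re(s) = 1: ln L(s,χ) = -Σ_{deg P ≤ M} ln(1 - χ(P)/|P|^s) + O((q^{-M/2}/M)·deg F). -/
open Polynomial Filter

/-!
Group the primes by degree. For `Re s = 1` and `deg P = k` the number `z = χ(P)|P|^{-s}` has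
`‖z‖ ≤ q^{-k}`, and `-log (1 - z) = z + O(‖z‖²)`. The linear terms of degree `k` add up to
`q^{-ks} ∑_{deg P = k} χ(P)`, which the character-sum bound makes `O(q^{-k/2}/k · deg F)`; as there
are at most `q^k` monic polynomials of degree `k`, the quadratic terms contribute at most `q^{-k}`,
which is of the same order. The tail over `k > M` is then dominated by a geometric series with
ratio `q^{-1/2} ≤ 1/√2`. That `‖χ‖ ≤ 1` comes from the finiteness of `F_q[T]/(F)`: by pigeonhole
`a^m ≡ a^n mod F` for some `m ≠ n`, so `χ(a)^m = χ(a)^n`.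
-/

section Character

variable {R : Type*} [CommRing R] {χ : R → ℂ}

-- Stated for positive exponents since `χ 1 = 1` is not assumed.
lemma map_pow_succ_of_map_mul (hmul : ∀ a b, χ (a * b) = χ a * χ b) (a : R) (n : ℕ) :
    χ (a ^ (n + 1)) = χ a ^ (n + 1) := by
  induction n with
  | zero => simp
  | succ n ih => rw [pow_succ a, hmul, ih, ← pow_succ]

lemma norm_le_one_of_periodic_of_map_mul {F : R} [Finite (R ⧸ Ideal.span {F})]
    (hper : ∀ a b, χ (a + b * F) = χ a) (hmul : ∀ a b, χ (a * b) = χ a * χ b) (a : R) :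
    ‖χ a‖ ≤ 1 := by
  obtain ⟨m, n, hmn, heq⟩ := Finite.exists_ne_map_eq_of_infinite
    fun k : ℕ => Ideal.Quotient.mk (Ideal.span {F}) (a ^ (k + 1))
  obtain ⟨b, hb⟩ := Ideal.mem_span_singleton'.mp (Ideal.Quotient.eq.mp heq)
  have hpow : ‖χ a‖ ^ (m + 1) = ‖χ a‖ ^ (n + 1) := by
    have h := hper (a ^ (n + 1)) b
    rw [hb, add_sub_cancel, map_pow_succ_of_map_mul hmul, map_pow_succ_of_map_mul hmul] at h
    rw [← norm_pow, ← norm_pow, h]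
  by_contra! h
  exact hmn (by simpa using (pow_right_inj₀ (one_pos.trans h) h.ne').mp hpow)

end Character

lemma finite_quotient_span_singleton {K : Type*} [Field K] [Finite K] {F : K[X]} (hF : F ≠ 0) :
    Finite (K[X] ⧸ Ideal.span {F}) :=
  have := (AdjoinRoot.powerBasis hF).finite
  Module.finite_of_finite (M := AdjoinRoot F) K

section PrimesOfDegree

variable (Fq : Type*) [Field Fq]

def primesOfDegree (k : ℕ) : Set Fq[X] :=
  {P | P.Monic ∧ Irreducible P ∧ P.natDegree = k}

/-- Monic polynomials of degree `k` are `X ^ k` plus an arbitrary polynomial of degree `< k`. -/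
noncomputable def monicOfDegreeEquiv (k : ℕ) :
    {p : Fq[X] // p.Monic ∧ p.natDegree = k} ≃ (Fin k → Fq) :=
  (monicEquivDegreeLT k).trans (degreeLTEquiv Fq k).toEquiv

variable [Fintype Fq]

lemma finite_monic_natDegree_eq (k : ℕ) : {p : Fq[X] | p.Monic ∧ p.natDegree = k}.Finite :=
  Set.finite_coe_iff.mp (Finite.of_equiv _ (monicOfDegreeEquiv Fq k).symm)

lemma primesOfDegree_finite (k : ℕ) : (primesOfDegree Fq k).Finite :=
  (finite_monic_natDegree_eq Fq k).subset fun _ hP => ⟨hP.1, hP.2.2⟩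

lemma ncard_primesOfDegree_le (k : ℕ) :
    (primesOfDegree Fq k).ncard ≤ Fintype.card Fq ^ k := calc
  _ ≤ {p : Fq[X] | p.Monic ∧ p.natDegree = k}.ncard :=
      Set.ncard_le_ncard (fun _ hP => ⟨hP.1, hP.2.2⟩) (finite_monic_natDegree_eq Fq k)
  _ = Fintype.card Fq ^ k := by
      rw [← Nat.card_coe_set_eq, Set.coe_ofPred, Nat.card_congr (monicOfDegreeEquiv Fq k)]
      simp

lemma finsum_mem_natDegree_le_eq_sum {M : Type*} [AddCommMonoid M] (f : Fq[X] → M) (n : ℕ) :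
    ∑ᶠ P ∈ {P : Fq[X] | P.Monic ∧ Irreducible P ∧ P.natDegree ≤ n}, f P
      = ∑ k ∈ Finset.range (n + 1), ∑ᶠ P ∈ primesOfDegree Fq k, f P := by
  have hunion : {P : Fq[X] | P.Monic ∧ Irreducible P ∧ P.natDegree ≤ n}
      = ⋃ k ∈ (Finset.range (n + 1) : Set ℕ), primesOfDegree Fq k := by
    ext P
    simp [primesOfDegree]
  have hdisj : (Finset.range (n + 1) : Set ℕ).PairwiseDisjoint (primesOfDegree Fq) :=
    fun i _ j _ hij => Set.disjoint_left.mpr fun P hi hj => hij (hi.2.2.symm.trans hj.2.2)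
  rw [hunion, finsum_mem_biUnion hdisj (Finset.finite_toSet _)
    (fun k _ => primesOfDegree_finite Fq k), finsum_mem_coe_finset]

end PrimesOfDegree

lemma norm_log_one_sub_add_self_le {z : ℂ} (hz : ‖z‖ ≤ 1 / 2) :
    ‖Complex.log (1 - z) + z‖ ≤ ‖z‖ ^ 2 := by
  have h := Complex.norm_log_one_add_sub_self_le (z := -z) (by rw [norm_neg]; linarith)
  rw [norm_neg, ← sub_eq_add_neg, sub_neg_eq_add] at h
  have hinv : (1 - ‖z‖)⁻¹ ≤ 2 := by
    rw [inv_le_comm₀ (by linarith) (by norm_num)]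
    linarith
  calc _ ≤ ‖z‖ ^ 2 * (1 - ‖z‖)⁻¹ / 2 := h
    _ ≤ ‖z‖ ^ 2 * 2 / 2 := by gcongr
    _ = ‖z‖ ^ 2 := by ring

lemma norm_finsum_log_primesOfDegree_le {Fq : Type*} [Field Fq] [Fintype Fq]
    {χ : Fq[X] → ℂ} (hχ : ∀ a, ‖χ a‖ ≤ 1) {s : ℂ} (hs : s.re = 1) {k : ℕ} (hk : 1 ≤ k) :
    ‖∑ᶠ P ∈ primesOfDegree Fq k,
        Complex.log (1 - χ P / ((Fintype.card Fq : ℂ) ^ P.natDegree) ^ s)‖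
      ≤ ‖∑ᶠ P ∈ primesOfDegree Fq k, χ P‖ / (Fintype.card Fq : ℝ) ^ k
        + ((Fintype.card Fq : ℝ) ^ k)⁻¹ := by
  set q := Fintype.card Fq
  set Q : ℝ := (q : ℝ) ^ k
  have hQ : 2 ≤ Q := by
    have hq : (2 : ℝ) ≤ q := by exact_mod_cast Fintype.one_lt_card (α := Fq)
    calc (2 : ℝ) = 2 ^ 1 := by norm_num
      _ ≤ 2 ^ k := pow_le_pow_right₀ one_le_two hk
      _ ≤ Q := pow_le_pow_left₀ zero_le_two hq k
  have hw : ‖((q : ℂ) ^ k) ^ s‖ = Q := by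
    rw [show ((q : ℂ) ^ k) = ((Q : ℝ) : ℂ) by push_cast [Q]; rfl,
      Complex.norm_cpow_eq_rpow_re_of_pos (by linarith), hs, Real.rpow_one]
  set z : Fq[X] → ℂ := fun P => χ P / ((q : ℂ) ^ k) ^ s
  have hz : ∀ P, ‖z P‖ ≤ Q⁻¹ := fun P => by
    rw [norm_div, hw, ← one_div]
    exact div_le_div_of_nonneg_right (hχ P) (by linarith)
  set T := (primesOfDegree_finite Fq k).toFinset
  have hsplit : ∑ P ∈ T, Complex.log (1 - χ P / ((q : ℂ) ^ P.natDegree) ^ s)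
      = ∑ P ∈ T, (Complex.log (1 - z P) + z P) - (∑ P ∈ T, χ P) / ((q : ℂ) ^ k) ^ s := by
    rw [Finset.sum_div, ← Finset.sum_sub_distrib]
    refine Finset.sum_congr rfl fun P hP => ?_
    rw [((primesOfDegree_finite Fq k).mem_toFinset.mp hP).2.2]
    ring
  have hquad : ‖∑ P ∈ T, (Complex.log (1 - z P) + z P)‖ ≤ Q⁻¹ := calc
    _ ≤ ∑ P ∈ T, ‖Complex.log (1 - z P) + z P‖ := norm_sum_le _ _
    _ ≤ ∑ _P ∈ T, Q⁻¹ ^ 2 := Finset.sum_le_sum fun P _ =>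
        (norm_log_one_sub_add_self_le ((hz P).trans (by
          rw [inv_le_comm₀ (by linarith) (by norm_num)]; linarith))).trans
          (pow_le_pow_left₀ (norm_nonneg _) (hz P) 2)
    _ ≤ Q * Q⁻¹ ^ 2 := by
        rw [Finset.sum_const, nsmul_eq_mul,
          ← Set.ncard_eq_toFinset_card _ (primesOfDegree_finite Fq k)]
        gcongr
        simp only [Q, q]
        exact_mod_cast ncard_primesOfDegree_le Fq k
    _ = Q⁻¹ := by field_simp
  rw [finsum_mem_eq_finite_toFinset_sum _ (primesOfDegree_finite Fq k),
    finsum_mem_eq_finite_toFinset_sum _ (primesOfDegree_finite Fq k), hsplit]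
  calc _ ≤ _ := norm_sub_le _ _
    _ ≤ _ := by
        rw [norm_div, hw, add_comm]
        exact add_le_add_right hquad _

lemma sq_le_four_mul_two_pow (k : ℕ) : k ^ 2 ≤ 4 * 2 ^ k := by
  induction k with
  | zero => norm_num
  | succ n ih =>
    have h1 : n < 2 ^ n := Nat.lt_two_pow_self
    rw [pow_succ 2 n]
    nlinarith

lemma natCast_mul_pow_le_two {r : ℝ} (hr0 : 0 ≤ r) (hr : r ^ 2 ≤ 1 / 2) (k : ℕ) :
    k * r ^ k ≤ 2 := by
  have hk : ((k : ℝ) ^ 2) ≤ 4 * 2 ^ k := by exact_mod_cast sq_le_four_mul_two_pow k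
  rw [← pow_le_pow_iff_left₀ (by positivity) zero_le_two two_ne_zero]
  calc ((k : ℝ) * r ^ k) ^ 2 = (k : ℝ) ^ 2 * (r ^ 2) ^ k := by ring
    _ ≤ (k : ℝ) ^ 2 * (1 / 2) ^ k := by gcongr
    _ ≤ 2 ^ 2 := by
        rw [one_div_pow, ← div_eq_mul_one_div, div_le_iff₀ (by positivity)]
        linarith

lemma inv_sqrt_sq_le_half {q : ℝ} (hq : 2 ≤ q) : (√q)⁻¹ ^ 2 ≤ 1 / 2 := by
  rw [inv_pow, Real.sq_sqrt (by linarith), ← one_div]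
  exact one_div_le_one_div_of_le zero_lt_two hq

lemma inv_sqrt_le_three_quarters {q : ℝ} (hq : 2 ≤ q) : (√q)⁻¹ ≤ 3 / 4 := by
  nlinarith [inv_sqrt_sq_le_half hq, show 0 ≤ (√q)⁻¹ by positivity]

lemma rpow_neg_natCast_div_two {q : ℝ} (hq : 0 ≤ q) (M : ℕ) :
    q ^ (-(M : ℝ) / 2) = (√q)⁻¹ ^ M := by
  rw [Real.rpow_div_two_eq_sqrt _ hq, Real.rpow_neg (Real.sqrt_nonneg q), Real.rpow_natCast,
    inv_pow]

/-- The two contributions of the primes of degree `k`, the character sum divided by `|P| = q^k` and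
the quadratic remainder `q^k · q^{-2k}`, are both `O(q^{-k/2}/k)`. -/
lemma weil_div_pow_add_inv_pow_le {q C d : ℝ} (hq : 2 ≤ q) (hd : 1 ≤ d) {k : ℕ} (hk : 1 ≤ k) :
    C * q ^ ((k : ℝ) / 2) / k * d / q ^ k + (q ^ k)⁻¹ ≤ (C + 2) * d * ((√q)⁻¹ ^ k / k) := by
  set r := (√q)⁻¹
  have hsq : √q ^ 2 = q := Real.sq_sqrt (by linarith)
  have hr0 : 0 < r := by positivity
  have hr2 : r ^ 2 ≤ 1 / 2 := inv_sqrt_sq_le_half hq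
  have hqk : q ^ k = (√q ^ k) ^ 2 := by rw [← pow_mul, mul_comm, pow_mul, hsq]
  have hmain : C * q ^ ((k : ℝ) / 2) / k * d / q ^ k = C * d * (r ^ k / k) := by
    rw [Real.rpow_div_two_eq_sqrt _ (by linarith), Real.rpow_natCast, hqk, inv_pow]
    field_simp
  have herr : (q ^ k)⁻¹ ≤ 2 * d * (r ^ k / k) := calc
    (q ^ k)⁻¹ = r ^ k / k * (k * r ^ k) := by rw [hqk, inv_pow, ← inv_pow]; field_simp
    _ ≤ r ^ k / k * 2 := by gcongr; exact natCast_mul_pow_le_two hr0.le hr2 k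
    _ ≤ 2 * d * (r ^ k / k) := by
        rw [mul_comm, mul_assoc]
        exact mul_le_mul_of_nonneg_left (le_mul_of_one_le_left (by positivity) hd) zero_le_two
  linarith

lemma summable_and_norm_tsum_tail_le {E : Type*} [NormedAddCommGroup E] [CompleteSpace E]
    {g : ℕ → E} {A r : ℝ} (hA : 0 ≤ A) (hr0 : 0 ≤ r) (hr1 : r < 1)
    (hg : ∀ k, 1 ≤ k → ‖g k‖ ≤ A * (r ^ k / k)) :
    Summable g ∧ ∀ M, 1 ≤ M → ‖∑' i, g (i + (M + 1))‖ ≤ A * (r ^ M / M) * (r / (1 - r)) := by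
  have hterm : ∀ M, 1 ≤ M → ∀ i, ‖g (i + (M + 1))‖ ≤ A * (r ^ M / M) * r * r ^ i := by
    intro M hM i
    calc _ ≤ A * (r ^ (i + (M + 1)) / (i + (M + 1) : ℕ)) := hg _ (by omega)
      _ ≤ A * (r ^ (i + (M + 1)) / M) := by gcongr; linarith [(i.cast_nonneg : (0 : ℝ) ≤ i)]
      _ = A * (r ^ M / M) * r * r ^ i := by ring
  have hgeo : ∀ M : ℕ, Summable fun i : ℕ => A * (r ^ M / M) * r * r ^ i := fun M =>
    (summable_geometric_of_lt_one hr0 hr1).mul_left _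
  have htail : ∀ M, 1 ≤ M → Summable fun i => ‖g (i + (M + 1))‖ := fun M hM =>
    (hgeo M).of_nonneg_of_le (fun _ => norm_nonneg _) (hterm M hM)
  refine ⟨(summable_nat_add_iff (1 + 1)).mp (htail 1 le_rfl).of_norm, fun M hM => ?_⟩
  calc _ ≤ ∑' i, ‖g (i + (M + 1))‖ := norm_tsum_le_tsum_norm (htail M hM)
    _ ≤ ∑' i, A * (r ^ M / M) * r * r ^ i := (htail M hM).tsum_le_tsum (hterm M hM) (hgeo M)
    _ = A * (r ^ M / M) * (r / (1 - r)) := by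
        rw [tsum_mul_left, tsum_geometric_of_lt_one hr0 hr1]
        ring

theorem log_L_truncation_general (Fq : Type) [Field Fq] [Fintype Fq]
    (q : ℕ) (hq : Fintype.card Fq = q)
    (F : Polynomial Fq) (hdeg : 0 < F.natDegree)
    (χ : Polynomial Fq → ℂ)
    (hper : ∀ a b : Polynomial Fq, χ (a + b * F) = χ a)
    (hmul : ∀ a b : Polynomial Fq, χ (a * b) = χ a * χ b)
    (C' : ℝ)
    (hbound : ∀ k : ℕ, 0 < k →
      ‖∑ᶠ P ∈ {P : Polynomial Fq | P.Monic ∧ Irreducible P ∧ P.natDegree = k}, χ P‖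
        ≤ C' * (q : ℝ) ^ ((k : ℝ) / 2) / k * F.natDegree) :
    ∃ C : ℝ, 0 < C ∧ ∀ s : ℂ, s.re = 1 →
      ∃ lnL : ℂ,
        Tendsto (fun M : ℕ =>
            -∑ᶠ P ∈ {P : Polynomial Fq | P.Monic ∧ Irreducible P ∧ P.natDegree ≤ M},
              Complex.log (1 - χ P / ((q : ℂ) ^ P.natDegree) ^ s))
          atTop (nhds lnL) ∧
        ∀ M : ℕ, 1 ≤ M →
          ‖lnL - (-∑ᶠ P ∈ {P : Polynomial Fq | P.Monic ∧ Irreducible P ∧ P.natDegree ≤ M},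
              Complex.log (1 - χ P / ((q : ℂ) ^ P.natDegree) ^ s))‖
            ≤ C * ((q : ℝ) ^ (-(M : ℝ) / 2) / M) * F.natDegree := by
  subst hq
  have hq : (2 : ℝ) ≤ Fintype.card Fq := by exact_mod_cast Fintype.one_lt_card (α := Fq)
  have hd : (1 : ℝ) ≤ F.natDegree := by exact_mod_cast hdeg
  have := finite_quotient_span_singleton (ne_zero_of_natDegree_gt hdeg)
  have hχ : ∀ a, ‖χ a‖ ≤ 1 := norm_le_one_of_periodic_of_map_mul hper hmul
  have hC' : 0 ≤ C' := by
    have h := (norm_nonneg _).trans (hbound 1 one_pos)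
    rw [mul_div_assoc, mul_assoc] at h
    exact nonneg_of_mul_nonneg_left h (by positivity)
  set r := (√(Fintype.card Fq : ℝ))⁻¹
  have hr : r ≤ 3 / 4 := inv_sqrt_le_three_quarters hq
  refine ⟨3 * (C' + 2), by positivity, fun s hs => ?_⟩
  obtain ⟨hsum, htail⟩ := summable_and_norm_tsum_tail_le (by positivity) (by positivity)
    (by linarith : r < 1) fun k hk =>
      (norm_finsum_log_primesOfDegree_le hχ hs hk).trans <|
        (add_le_add (div_le_div_of_nonneg_right (hbound k hk) (by positivity)) le_rfl).trans
          (weil_div_pow_add_inv_pow_le hq hd hk)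
  refine ⟨_, (hsum.hasSum.tendsto_sum_nat.comp (tendsto_add_atTop_nat 1)).neg.congr
    fun M => congrArg Neg.neg (finsum_mem_natDegree_le_eq_sum Fq _ M).symm, fun M hM => ?_⟩
  rw [finsum_mem_natDegree_le_eq_sum, ← hsum.sum_add_tsum_nat_add (M + 1),
    show ∀ a b : ℂ, -(a + b) - -a = -b by intros; ring, norm_neg,
    rpow_neg_natCast_div_two (by positivity)]
  calc _ ≤ (C' + 2) * F.natDegree * (r ^ M / M) * (r / (1 - r)) := htail M hM
    _ ≤ (C' + 2) * F.natDegree * (r ^ M / M) * 3 := by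
        gcongr
        rw [div_le_iff₀ (by linarith)]
        linarith
    _ = _ := by ring

/-- Truncation of `ln L(s,χ)` on the line `Re(s) = 1`: assuming the Weil character-sum
bound, the prime series defining `ln L(s,χ)` converges and its tail beyond degree `M`
is `O((q^{-M/2}/M)·deg F)`. -/
theorem log_L_truncation (Fq : Type) [Field Fq] [Fintype Fq]
    (q : ℕ) (hq : Fintype.card Fq = q)
    (F : Polynomial Fq) (hF : F.Monic) (hdeg : 0 < F.natDegree)
    (χ : Polynomial Fq → ℂ)
    (hper : ∀ a b : Polynomial Fq, χ (a + b * F) = χ a)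
    (hmul : ∀ a b : Polynomial Fq, χ (a * b) = χ a * χ b)
    (hunit : ∀ a : Polynomial Fq, χ a ≠ 0 ↔ IsCoprime a F)
    (hnontriv : ∃ a : Polynomial Fq, IsCoprime a F ∧ χ a ≠ 1)
    (C' : ℝ)
    (hbound : ∀ k : ℕ, 0 < k →
      ‖∑ᶠ P ∈ {P : Polynomial Fq | P.Monic ∧ Irreducible P ∧ P.natDegree = k}, χ P‖
        ≤ C' * (q : ℝ) ^ ((k : ℝ) / 2) / k * F.natDegree) :
    ∃ C : ℝ, 0 < C ∧ ∀ s : ℂ, s.re = 1 →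
      ∃ lnL : ℂ,
        Tendsto (fun M : ℕ =>
            -∑ᶠ P ∈ {P : Polynomial Fq | P.Monic ∧ Irreducible P ∧ P.natDegree ≤ M},
              Complex.log (1 - χ P / ((q : ℂ) ^ P.natDegree) ^ s))
          atTop (nhds lnL) ∧
        ∀ M : ℕ, 1 ≤ M →
          ‖lnL - (-∑ᶠ P ∈ {P : Polynomial Fq | P.Monic ∧ Irreducible P ∧ P.natDegree ≤ M},
              Complex.log (1 - χ P / ((q : ℂ) ^ P.natDegree) ^ s))‖
            ≤ C * ((q : ℝ) ^ (-(M : ℝ) / 2) / M) * F.natDegree :=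
  log_L_truncation_general Fq q hq F hdeg χ hper hmul C' hbound
end

section
/- Define E_P(r) = 1/(|P|+1) + (|P|/(2(|P|+1)))·((1-1/|P|)^{-r} + (1+1/|P|)^{-r}) for a real parameter r. If r is large and |P| > r^{2/3}, then ln E_P(r) = ln cosh(r/|P|) + O(r/|P|²). -/
/-- The random Euler factor at a real argument `r`. -/
noncomputable def Ep (p r : ℝ) : ℝ :=
  1 / (p + 1) + p / (2 * (p + 1)) * ((1 - 1 / p) ^ (-r) + (1 + 1 / p) ^ (-r))

/-!
Put `x = r / p` and `s = r / p ^ 2`. Since `log (1 + t) = t + O(t ^ 2)`, the powers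
`(1 ∓ 1 / p) ^ (-r)` are `exp (± x + O(s))`, so their average is `cosh x * exp (O(s))`.
`Ep p r` mixes this average with the constant `1` with weight `1 / (p + 1)`; because
`1 - 1 / cosh x ≤ log (cosh x) ≤ |x|`, that lowers it by at most a factor
`1 - O(x / p) = 1 - O(s)`.
Finally `r ^ (2 / 3) < p` gives `s < r ^ (-1 / 3)`, which is small for large `r`.
-/

open Real

lemma abs_log_one_add_sub_self_le {t : ℝ} (ht : |t| ≤ 1 / 2) :
    |log (1 + t) - t| ≤ 2 * t ^ 2 := by
  have h := abs_log_sub_add_sum_range_le (x := -t) (by rw [abs_neg]; linarith) 1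
  simp only [abs_neg, Finset.range_one, Finset.sum_singleton, zero_add, pow_one,
    Nat.cast_zero, div_one, sub_neg_eq_add] at h
  calc |log (1 + t) - t| = |-t + log (1 + t)| := by ring_nf
    _ ≤ |t| ^ 2 / (1 - |t|) := h
    _ ≤ 2 * t ^ 2 := by
      rw [div_le_iff₀ (by linarith), sq_abs]
      nlinarith [mul_nonneg (sq_nonneg t) (by linarith : 0 ≤ 1 - 2 * |t|)]

lemma abs_log_rpow_neg_add_mul_le {r t : ℝ} (hr : 0 ≤ r) (ht : |t| ≤ 1 / 2) :
    |log ((1 + t) ^ (-r)) + r * t| ≤ 2 * r * t ^ 2 := by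
  have h1t : 0 < 1 + t := by linarith [neg_abs_le t]
  rw [log_rpow h1t, show -r * log (1 + t) + r * t = -(r * (log (1 + t) - t)) by ring,
    abs_neg, abs_mul, abs_of_nonneg hr]
  linarith [mul_le_mul_of_nonneg_left (abs_log_one_add_sub_self_le ht) hr]

lemma half_add_mem_Icc_exp_mul_cosh {A B x ε : ℝ} (hA : 0 < A) (hB : 0 < B)
    (hAx : |log A - x| ≤ ε) (hBx : |log B + x| ≤ ε) :
    (A + B) / 2 ∈ Set.Icc (exp (-ε) * cosh x) (exp ε * cosh x) := by
  obtain ⟨hA₁, hA₂⟩ := abs_le.mp hAx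
  obtain ⟨hB₁, hB₂⟩ := abs_le.mp hBx
  rw [← exp_log hA, ← exp_log hB, cosh_eq, mul_div_assoc', mul_div_assoc', mul_add, mul_add,
    ← exp_add, ← exp_add, ← exp_add, ← exp_add]
  constructor <;> gcongr <;> linarith

lemma cosh_sub_one_le_abs_mul_cosh (x : ℝ) : cosh x - 1 ≤ |x| * cosh x := by
  have hc := cosh_pos x
  have hcosh : cosh x ≤ exp |x| := by
    rw [← cosh_abs, cosh_eq]
    linarith [exp_le_exp.mpr (neg_le_self (abs_nonneg x))]
  have hlog : 1 - (cosh x)⁻¹ ≤ |x| :=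
    (one_sub_inv_le_log_of_pos hc).trans ((log_le_iff_le_exp hc).mpr hcosh)
  have := mul_le_mul_of_nonneg_right hlog hc.le
  rwa [sub_mul, inv_mul_cancel₀ hc.ne', one_mul] at this

lemma add_one_sub_mul_le_exp_mul {w M c ε : ℝ} (hw0 : 0 ≤ w) (hw1 : w ≤ 1) (hc : 1 ≤ c)
    (hε : 0 ≤ ε) (hM : M ≤ exp ε * c) : w + (1 - w) * M ≤ exp ε * c := by
  have : 1 ≤ exp ε * c := one_le_mul_of_one_le_of_one_le (one_le_exp hε) hc
  nlinarith

lemma exp_neg_mul_sub_le_add_one_sub_mul {w M c ε : ℝ} (hw0 : 0 ≤ w) (hw1 : w ≤ 1)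
    (hc : 0 ≤ c) (hε : 0 ≤ ε) (hM : exp (-ε) * c ≤ M) :
    exp (-ε) * c - w * (c - 1) ≤ w + (1 - w) * M := by
  have : exp (-ε) ≤ 1 := exp_le_one_iff.mpr (neg_nonpos.mpr hε)
  nlinarith [mul_nonneg hw0 hc]

lemma Ep_eq_add_one_sub_mul {p : ℝ} (hp : 0 < p) (r : ℝ) :
    Ep p r =
      1 / (p + 1) + (1 - 1 / (p + 1)) * (((1 - 1 / p) ^ (-r) + (1 + 1 / p) ^ (-r)) / 2) := by
  unfold Ep
  field_simp
  ring

section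

variable {p r : ℝ}

lemma half_add_rpow_neg_mem_Icc (hp : 2 ≤ p) (hr : 0 ≤ r) :
    ((1 - 1 / p) ^ (-r) + (1 + 1 / p) ^ (-r)) / 2 ∈
      Set.Icc (exp (-(2 * (r / p ^ 2))) * cosh (r / p)) (exp (2 * (r / p ^ 2)) * cosh (r / p)) := by
  have hu : |1 / p| ≤ 1 / 2 := by
    rw [abs_of_pos (by positivity)]
    exact one_div_le_one_div_of_le two_pos hp
  have hlo := abs_log_rpow_neg_add_mul_le hr (t := -(1 / p)) (by rwa [abs_neg])
  have hhi := abs_log_rpow_neg_add_mul_le hr hu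
  apply half_add_mem_Icc_exp_mul_cosh
    (rpow_pos_of_pos (by linarith [hu.trans' (le_abs_self _)]) _)
    (rpow_pos_of_pos (by positivity) _)
  · convert hlo using 1 <;> ring_nf
  · convert hhi using 1 <;> ring_nf

lemma Ep_le_exp_mul_cosh (hp : 2 ≤ p) (hr : 0 ≤ r) :
    Ep p r ≤ exp (2 * (r / p ^ 2)) * cosh (r / p) := by
  rw [Ep_eq_add_one_sub_mul (by linarith)]
  exact add_one_sub_mul_le_exp_mul (by positivity) (div_le_one_of_le₀ (by linarith) (by linarith))
    (one_le_cosh _) (by positivity) (half_add_rpow_neg_mem_Icc hp hr).2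

lemma one_sub_mul_cosh_le_Ep (hp : 2 ≤ p) (hr : 0 ≤ r) :
    (1 - 3 * (r / p ^ 2)) * cosh (r / p) ≤ Ep p r := by
  have hp0 : 0 < p := by linarith
  rw [Ep_eq_add_one_sub_mul hp0]
  refine le_trans ?_ (exp_neg_mul_sub_le_add_one_sub_mul (by positivity)
    (div_le_one_of_le₀ (by linarith) (by linarith)) (cosh_pos _).le (by positivity)
    (half_add_rpow_neg_mem_Icc hp hr).1)
  have hexp : 1 - 2 * (r / p ^ 2) ≤ exp (-(2 * (r / p ^ 2))) := by
    linarith [add_one_le_exp (-(2 * (r / p ^ 2)))]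
  have hweight : 1 / (p + 1) * (cosh (r / p) - 1) ≤ r / p ^ 2 * cosh (r / p) := by
    have hc := cosh_sub_one_le_abs_mul_cosh (r / p)
    rw [abs_of_nonneg (by positivity)] at hc
    calc 1 / (p + 1) * (cosh (r / p) - 1) ≤ 1 / p * (r / p * cosh (r / p)) := by
          gcongr
          · linarith [one_le_cosh (r / p)]
          · linarith
      _ = r / p ^ 2 * cosh (r / p) := by ring
  nlinarith [cosh_pos (r / p)]

end

lemma abs_log_sub_log_le_six_mul {E c s : ℝ} (hc : 0 < c) (hs0 : 0 ≤ s) (hs : s ≤ 1 / 6)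
    (hlo : (1 - 3 * s) * c ≤ E) (hhi : E ≤ exp (2 * s) * c) : |log E - log c| ≤ 6 * s := by
  have hpos : 0 < 1 - 3 * s := by linarith
  have hlog_lo := log_le_log (mul_pos hpos hc) hlo
  have hlog_hi := log_le_log ((mul_pos hpos hc).trans_le hlo) hhi
  rw [log_mul hpos.ne' hc.ne'] at hlog_lo
  rw [log_mul (exp_pos _).ne' hc.ne', log_exp] at hlog_hi
  have hlog_one_sub : -(6 * s) ≤ log (1 - 3 * s) := by
    refine le_trans ?_ (one_sub_inv_le_log_of_pos hpos)
    have : (1 - 3 * s)⁻¹ ≤ 1 + 6 * s := by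
      rw [inv_le_iff_one_le_mul₀ hpos]
      nlinarith
    linarith
  rw [abs_le]
  constructor <;> linarith

lemma div_sq_le_one_sixth_of_rpow_lt {p r : ℝ} (hr : 216 ≤ r) (hrp : r ^ ((2 : ℝ) / 3) < p) :
    r / p ^ 2 ≤ 1 / 6 := by
  have hr0 : 0 ≤ r := by linarith
  set t := r ^ ((1 : ℝ) / 3) with ht
  have ht0 : 0 ≤ t := rpow_nonneg hr0 _
  have hrt : r = t ^ 3 := by rw [ht, ← rpow_natCast, ← rpow_mul hr0]; norm_num
  have hpt : t ^ 2 < p := by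
    rwa [ht, ← rpow_natCast, ← rpow_mul hr0, show (1 : ℝ) / 3 * (2 : ℕ) = 2 / 3 by norm_num]
  have ht6 : 6 ≤ t := le_of_pow_le_pow_left₀ three_ne_zero ht0 (by rw [← hrt]; linarith)
  rw [div_le_iff₀ (by nlinarith), hrt]
  nlinarith [mul_le_mul_of_nonneg_right ht6 (pow_nonneg ht0 3)]

/-- If `r` is large and `|P| > r^{2/3}` then `ln E_P(r) = ln cosh(r/|P|) + O(r/|P|²)`. -/
theorem log_Ep_large_p :
    ∃ C r0 : ℝ, 0 < C ∧ ∀ r : ℝ, r0 ≤ r → ∀ p : ℝ, 5 ≤ p → r ^ ((2 : ℝ) / 3) < p →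
      |Real.log (Ep p r) - Real.log (Real.cosh (r / p))| ≤ C * r / p ^ 2 := by
  refine ⟨6, 216, by norm_num, fun r hr p hp hrp => ?_⟩
  have hr0 : 0 ≤ r := by linarith
  rw [mul_div_assoc]
  exact abs_log_sub_log_le_six_mul (cosh_pos _) (by positivity)
    (div_sq_le_one_sixth_of_rpow_lt hr hrp) (one_sub_mul_cosh_le_Ep (by linarith) hr0)
    (Ep_le_exp_mul_cosh (by linarith) hr0)
end

section
/- Define E_P(r) as in the random Euler factor. If r is large and 2 ≤ |P| ≤ r^{2/3}, then ln E_P(r) = -r·ln(1 - 1/|P|) + O(1), with an absolute implied constant. -/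
/-- If `r` is large and `2 ≤ |P| ≤ r^{2/3}` then `ln E_P(r) = -r·ln(1 - 1/|P|) + O(1)`. -/
theorem log_Ep_small_p :
    ∃ C r0 : ℝ, 0 < C ∧ ∀ r : ℝ, r0 ≤ r →
      ∀ p : ℝ, 2 ≤ p → p ≤ r ^ ((2 : ℝ) / 3) →
      |Real.log (Ep p r) + r * Real.log (1 - 1 / p)| ≤ C := by
  refine ⟨Real.log 3, 1, Real.log_pos (by norm_num), ?_⟩
  intro r hr p hp _
  have hp0 : (0:ℝ) < p := by linarith
  have hinv : 1 / p ≤ 1 / 2 := by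
    rw [div_le_div_iff₀ hp0 (by norm_num)]; linarith
  have hinv0 : 0 < 1 / p := by positivity
  have hx0 : (0:ℝ) < 1 - 1 / p := by linarith
  have hx1 : 1 - 1 / p ≤ 1 := by linarith
  set A := (1 - 1 / p) ^ (-r) with hA
  set B := (1 + 1 / p) ^ (-r) with hB
  have hA1 : 1 ≤ A := Real.one_le_rpow_of_pos_of_le_one_of_nonpos hx0 hx1 (by linarith)
  have hB0 : 0 < B := Real.rpow_pos_of_pos (by linarith) _
  have hB1 : B ≤ 1 := Real.rpow_le_one_of_one_le_of_nonpos (by linarith) (by linarith)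
  have hp1 : (0:ℝ) < p + 1 := by linarith
  have hlow : A / 3 ≤ Ep p r := by
    have h1 : 1 / 3 ≤ p / (2 * (p + 1)) := by
      rw [div_le_div_iff₀ (by norm_num) (by positivity)]; linarith
    have h2 : A / 3 ≤ p / (2 * (p + 1)) * (A + B) := by nlinarith
    have h4 : 0 ≤ 1 / (p + 1) := by positivity
    rw [Ep, ← hA, ← hB]; linarith
  have hhigh : Ep p r ≤ 2 * A := by
    have h1 : p / (2 * (p + 1)) ≤ 1 / 2 := by
      rw [div_le_div_iff₀ (by positivity) (by norm_num)]; linarith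
    have h2 : 1 / (p + 1) ≤ A := by
      have : 1 / (p + 1) ≤ 1 := by rw [div_le_one hp1]; linarith
      linarith
    have h3 : p / (2 * (p + 1)) * (A + B) ≤ A := by nlinarith
    rw [Ep, ← hA, ← hB]; linarith
  have hA0 : (0:ℝ) < A := by linarith
  have hE0 : 0 < Ep p r := lt_of_lt_of_le (by positivity) hlow
  have hlogA : Real.log A = -r * Real.log (1 - 1 / p) := Real.log_rpow hx0 (-r)
  have hl : Real.log (A / 3) ≤ Real.log (Ep p r) := by
    gcongr
  have hh : Real.log (Ep p r) ≤ Real.log (2 * A) := by gcongr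
  rw [Real.log_div (by positivity) (by norm_num)] at hl
  rw [Real.log_mul (by norm_num) (by positivity)] at hh
  have h23 : Real.log 2 ≤ Real.log 3 := Real.log_le_log (by norm_num) (by norm_num)
  rw [abs_le]
  constructor <;> nlinarith [hlogA]
end

section
/- The function g(y) = (ln cosh y)/y − tanh y on (0,∞) satisfies: g(y) < 0 for all y > 0, g is strictly decreasing on (0,c) and strictly increasing on (c,∞) where c ≈ 1.28377 is the unique positive critical point of g, and g(y) → 0 as y → 0⁺ and as y → ∞. -/
open Filter

/-!
The numerator `y² g'(y) = y tanh y - log (cosh y) - y² sech² y` has derivative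
`2 y sech² y (y tanh y - 1/2)`. As `y tanh y` increases from `0` to `∞`, the numerator first
decreases from its value `0` at `0` and then increases, so it has exactly one positive zero `c`,
located by evaluating it at `1.28` and `1.29`. Since `(y tanh y - log (cosh y))' = y sech² y`,
we get `log (cosh y) < y tanh y ≤ log (cosh y) + log 2` for `y > 0`, i.e.
`-log 2 / y ≤ g y < 0`; with `-tanh y ≤ g y` this gives the limits.
-/

open Real Set Topology

lemma neg_on_Ioo_and_pos_on_Ioi_of_strictAntiOn_of_strictMonoOn {f : ℝ → ℝ} {x₀ a c : ℝ}
    (hx₀a : x₀ ≤ a) (hx₀c : x₀ < c) (hfx₀ : f x₀ = 0) (hfc : f c = 0)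
    (hanti : StrictAntiOn f (Icc x₀ a)) (hmono : StrictMonoOn f (Ici a)) :
    (∀ y ∈ Ioo x₀ c, f y < 0) ∧ ∀ y ∈ Ioi c, 0 < f y := by
  have hac : a < c := by
    by_contra! hca
    exact (hanti ⟨le_rfl, hx₀a⟩ ⟨hx₀c.le, hca⟩ hx₀c).ne (hfc.trans hfx₀.symm)
  refine ⟨fun y ⟨hx₀y, hyc⟩ => ?_, fun y hcy => ?_⟩
  · rcases le_or_gt y a with hya | hay
    · exact hfx₀ ▸ hanti ⟨le_rfl, hx₀a⟩ ⟨hx₀y.le, hya⟩ hx₀y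
    · exact hfc ▸ hmono (mem_Ici.2 hay.le) (mem_Ici.2 hac.le) hyc
  · exact hfc ▸ hmono (mem_Ici.2 hac.le) (mem_Ici.2 (hac.trans hcy).le) hcy

namespace Real

lemma hasDerivAt_tanh (x : ℝ) : HasDerivAt tanh ((1 / cosh x) ^ 2) x := by
  rw [show tanh = sinh / cosh from funext tanh_eq_sinh_div_cosh]
  refine ((hasDerivAt_sinh x).div (hasDerivAt_cosh x) (cosh_pos x).ne').congr_deriv ?_
  rw [div_pow, one_pow, ← cosh_sq_sub_sinh_sq x]
  ring

lemma continuous_tanh : Continuous tanh :=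
  continuous_iff_continuousAt.2 fun x => (hasDerivAt_tanh x).continuousAt

lemma tanh_pos {x : ℝ} (hx : 0 < x) : 0 < tanh x := by
  rw [tanh_eq_sinh_div_cosh]
  exact div_pos (sinh_pos_iff.2 hx) (cosh_pos x)

lemma hasDerivAt_log_cosh (x : ℝ) : HasDerivAt (fun y => log (cosh y)) (tanh x) x := by
  simpa only [tanh_eq_sinh_div_cosh] using (hasDerivAt_cosh x).log (cosh_pos x).ne'

lemma sub_log_two_le_log_cosh (x : ℝ) : x - log 2 ≤ log (cosh x) := by
  have hcosh : exp x / 2 ≤ cosh x := by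
    rw [cosh_eq]
    linarith [exp_pos (-x)]
  calc x - log 2 = log (exp x / 2) := by rw [log_div (exp_ne_zero x) two_ne_zero, log_exp]
    _ ≤ log (cosh x) := log_le_log (by positivity) hcosh

-- The Taylor bounds for `exp` need an argument in `[0, 1]`, hence the passage through `y / 2`.
lemma cosh_sinh_bounds_of_exp_half {y l u : ℝ} (hl0 : 0 < l) (hl : l < exp (y / 2))
    (hu : exp (y / 2) < u) :
    (l ^ 2 + (u ^ 2)⁻¹) / 2 < cosh y ∧ cosh y < (u ^ 2 + (l ^ 2)⁻¹) / 2 ∧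
      (l ^ 2 - (l ^ 2)⁻¹) / 2 < sinh y ∧ sinh y < (u ^ 2 - (u ^ 2)⁻¹) / 2 := by
  have hexp : exp y = exp (y / 2) ^ 2 := by rw [← exp_nat_mul]; ring_nf
  have hlo : l ^ 2 < exp y := hexp ▸ pow_lt_pow_left₀ hl hl0.le two_ne_zero
  have hhi : exp y < u ^ 2 := hexp ▸ pow_lt_pow_left₀ hu (exp_pos _).le two_ne_zero
  have hlo' : (u ^ 2)⁻¹ < exp (-y) := exp_neg y ▸ inv_strictAnti₀ (exp_pos y) hhi
  have hhi' : exp (-y) < (l ^ 2)⁻¹ := exp_neg y ▸ inv_strictAnti₀ (by positivity) hlo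
  rw [cosh_eq, sinh_eq]
  exact ⟨by linarith, by linarith, by linarith, by linarith⟩

end Real

lemma log_cosh_lt_mul_tanh {y : ℝ} (hy : 0 < y) : log (cosh y) < y * tanh y := by
  let F := fun x : ℝ => x * tanh x - log (cosh x)
  have hF' (x : ℝ) : HasDerivAt F (x * (1 / cosh x) ^ 2) x := by
    refine (((hasDerivAt_id' x).fun_mul (hasDerivAt_tanh x)).fun_sub
      (hasDerivAt_log_cosh x)).congr_deriv ?_
    ring
  have hF : StrictMonoOn F (Ici 0) := by
    refine strictMonoOn_of_hasDerivWithinAt_pos (convex_Ici 0)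
      (fun x _ => (hF' x).continuousAt.continuousWithinAt) (fun x _ => (hF' x).hasDerivWithinAt)
      fun x hx => ?_
    rw [interior_Ici] at hx
    exact mul_pos hx (by positivity)
  simpa [F] using hF self_mem_Ici hy.le hy

lemma mul_tanh_le_log_cosh_add_log_two {y : ℝ} (hy : 0 ≤ y) :
    y * tanh y ≤ log (cosh y) + log 2 := by
  nlinarith [tanh_lt_one y, sub_log_two_le_log_cosh y]

lemma hasDerivAt_mul_tanh (x : ℝ) :
    HasDerivAt (fun y => y * tanh y) (tanh x + x * (1 / cosh x) ^ 2) x :=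
  ((hasDerivAt_id' x).fun_mul (hasDerivAt_tanh x)).congr_deriv (by ring)

lemma strictMonoOn_mul_tanh : StrictMonoOn (fun y => y * tanh y) (Ici 0) := by
  refine strictMonoOn_of_hasDerivWithinAt_pos (convex_Ici 0)
    (fun x _ => (hasDerivAt_mul_tanh x).continuousAt.continuousWithinAt)
    (fun x _ => (hasDerivAt_mul_tanh x).hasDerivWithinAt) fun x hx => ?_
  rw [interior_Ici] at hx
  exact add_pos (tanh_pos hx) (mul_pos hx (by positivity))

noncomputable def g (y : ℝ) : ℝ := log (cosh y) / y - tanh y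

noncomputable def gDerivNum (y : ℝ) : ℝ :=
  y * tanh y - log (cosh y) - y ^ 2 * (1 / cosh y) ^ 2

lemma gDerivNum_div_sq {y : ℝ} (hy : y ≠ 0) :
    gDerivNum y / y ^ 2 = tanh y / y - log (cosh y) / y ^ 2 - (1 / cosh y) ^ 2 := by
  unfold gDerivNum
  field_simp

lemma hasDerivAt_g {y : ℝ} (hy : y ≠ 0) : HasDerivAt g (gDerivNum y / y ^ 2) y := by
  rw [gDerivNum_div_sq hy]
  refine (((hasDerivAt_log_cosh y).fun_div (hasDerivAt_id' y) hy).fun_sub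
    (hasDerivAt_tanh y)).congr_deriv ?_
  field_simp

lemma g_neg {y : ℝ} (hy : 0 < y) : g y < 0 := by
  rw [g, sub_neg, div_lt_iff₀ hy, mul_comm]
  exact log_cosh_lt_mul_tanh hy

lemma strictAntiOn_g {s : Set ℝ} (hs : Convex ℝ s) (hs0 : s ⊆ Ioi 0)
    (hneg : ∀ y ∈ interior s, gDerivNum y < 0) : StrictAntiOn g s :=
  strictAntiOn_of_hasDerivWithinAt_neg hs
    (fun _ hy => (hasDerivAt_g (hs0 hy).ne').continuousAt.continuousWithinAt)
    (fun _ hy => (hasDerivAt_g (hs0 (interior_subset hy)).ne').hasDerivWithinAt)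
    fun y hy => div_neg_of_neg_of_pos (hneg y hy) (pow_pos (hs0 (interior_subset hy)) 2)

lemma strictMonoOn_g {s : Set ℝ} (hs : Convex ℝ s) (hs0 : s ⊆ Ioi 0)
    (hpos : ∀ y ∈ interior s, 0 < gDerivNum y) : StrictMonoOn g s :=
  strictMonoOn_of_hasDerivWithinAt_pos hs
    (fun _ hy => (hasDerivAt_g (hs0 hy).ne').continuousAt.continuousWithinAt)
    (fun _ hy => (hasDerivAt_g (hs0 (interior_subset hy)).ne').hasDerivWithinAt)
    fun y hy => div_pos (hpos y hy) (pow_pos (hs0 (interior_subset hy)) 2)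

lemma tendsto_g_nhdsGT_zero : Tendsto g (𝓝[>] 0) (𝓝 0) := by
  have htanh : Tendsto (fun y => -tanh y) (𝓝[>] 0) (𝓝 0) := by
    simpa using ((continuous_tanh.tendsto 0).neg).mono_left nhdsWithin_le_nhds
  refine tendsto_of_tendsto_of_tendsto_of_le_of_le' htanh tendsto_const_nhds ?_ ?_
  · filter_upwards [self_mem_nhdsWithin] with y (hy : 0 < y)
    have : 0 ≤ log (cosh y) / y := div_nonneg (log_nonneg (one_le_cosh y)) hy.le
    rw [g]
    linarith
  · filter_upwards [self_mem_nhdsWithin] with y hy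
    exact (g_neg hy).le

lemma tendsto_g_atTop : Tendsto g atTop (𝓝 0) := by
  have hlog : Tendsto (fun y => -log 2 / y) atTop (𝓝 0) :=
    tendsto_const_nhds.div_atTop tendsto_id
  refine tendsto_of_tendsto_of_tendsto_of_le_of_le' hlog tendsto_const_nhds ?_ ?_
  · filter_upwards [eventually_gt_atTop 0] with y hy
    rw [g, div_le_iff₀ hy, sub_mul, div_mul_cancel₀ _ hy.ne', mul_comm]
    linarith [mul_tanh_le_log_cosh_add_log_two hy.le]
  · filter_upwards [eventually_gt_atTop 0] with y hy
    exact (g_neg hy).le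

lemma hasDerivAt_sech_sq (x : ℝ) :
    HasDerivAt (fun y => (1 / cosh y) ^ 2) (-2 * tanh x * (1 / cosh x) ^ 2) x := by
  have hcosh := (cosh_pos x).ne'
  refine (((hasDerivAt_const x 1).fun_div (hasDerivAt_cosh x) hcosh).fun_pow 2).congr_deriv ?_
  rw [tanh_eq_sinh_div_cosh]
  norm_num
  field_simp

lemma hasDerivAt_gDerivNum (x : ℝ) :
    HasDerivAt gDerivNum (2 * x * (1 / cosh x) ^ 2 * (x * tanh x - 1 / 2)) x :=
  (((hasDerivAt_mul_tanh x).sub (hasDerivAt_log_cosh x)).sub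
    ((hasDerivAt_pow 2 x).fun_mul (hasDerivAt_sech_sq x))).congr_deriv (by ring)

lemma gDerivNum_zero : gDerivNum 0 = 0 := by simp [gDerivNum]

lemma strictAntiOn_gDerivNum {a : ℝ} (ha : a * tanh a = 1 / 2) :
    StrictAntiOn gDerivNum (Icc 0 a) := by
  refine strictAntiOn_of_hasDerivWithinAt_neg (convex_Icc 0 a)
    (fun x _ => (hasDerivAt_gDerivNum x).continuousAt.continuousWithinAt)
    (fun x _ => (hasDerivAt_gDerivNum x).hasDerivWithinAt) fun x hx => ?_
  rw [interior_Icc] at hx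
  have hlt : x * tanh x < 1 / 2 :=
    ha ▸ strictMonoOn_mul_tanh (mem_Ici.2 hx.1.le) (mem_Ici.2 (hx.1.trans hx.2).le) hx.2
  exact mul_neg_of_pos_of_neg (by have := hx.1; positivity) (by linarith)

lemma strictMonoOn_gDerivNum {a : ℝ} (ha0 : 0 ≤ a) (ha : a * tanh a = 1 / 2) :
    StrictMonoOn gDerivNum (Ici a) := by
  refine strictMonoOn_of_hasDerivWithinAt_pos (convex_Ici a)
    (fun x _ => (hasDerivAt_gDerivNum x).continuousAt.continuousWithinAt)
    (fun x _ => (hasDerivAt_gDerivNum x).hasDerivWithinAt) fun x hx => ?_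
  rw [interior_Ici] at hx
  have hx0 : 0 < x := ha0.trans_lt hx
  have hlt : 1 / 2 < x * tanh x := ha ▸ strictMonoOn_mul_tanh (mem_Ici.2 ha0) hx0.le hx
  exact mul_pos (by positivity) (by linarith)

lemma cosh_sinh_1_28_bounds : 1.9373384 < cosh 1.28 ∧ cosh 1.28 < 1.9373386 ∧
    1.6593011 < sinh 1.28 ∧ sinh 1.28 < 1.6593013 := by
  have hlo := sum_le_exp_of_nonneg (x := 1.28 / 2) (by norm_num) 12
  have hhi := exp_bound' (x := 1.28 / 2) (by norm_num) (by norm_num) (n := 12) (by norm_num)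
  norm_num [Finset.sum_range_succ, Nat.factorial] at hlo hhi
  obtain ⟨h₁, h₂, h₃, h₄⟩ := cosh_sinh_bounds_of_exp_half (y := 1.28) (l := 1.89648087)
    (u := 1.89648088) (by norm_num) (by norm_num; linarith) (by norm_num; linarith)
  norm_num at h₁ h₂ h₃ h₄
  exact ⟨by linarith, by linarith, by linarith, by linarith⟩

lemma cosh_sinh_1_29_bounds : 1.9540286 < cosh 1.29 ∧ cosh 1.29 < 1.9540288 ∧
    1.6787578 < sinh 1.29 ∧ sinh 1.29 < 1.6787580 := by
  have hlo := sum_le_exp_of_nonneg (x := 1.29 / 2) (by norm_num) 12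
  have hhi := exp_bound' (x := 1.29 / 2) (by norm_num) (by norm_num) (n := 12) (by norm_num)
  norm_num [Finset.sum_range_succ, Nat.factorial] at hlo hhi
  obtain ⟨h₁, h₂, h₃, h₄⟩ := cosh_sinh_bounds_of_exp_half (y := 1.29) (l := 1.90598702)
    (u := 1.90598703) (by norm_num) (by norm_num; linarith) (by norm_num; linarith)
  norm_num at h₁ h₂ h₃ h₄
  exact ⟨by linarith, by linarith, by linarith, by linarith⟩

lemma gDerivNum_1_28_neg : gDerivNum 1.28 < 0 := by
  obtain ⟨hc₁, hc₂, hs₁, hs₂⟩ := cosh_sinh_1_28_bounds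
  have hcosh := cosh_pos 1.28
  have hlog : 0.6598 < log (cosh 1.28) := by
    have := exp_bound' (x := 0.6598) (by norm_num) (by norm_num) (n := 12) (by norm_num)
    norm_num [Finset.sum_range_succ, Nat.factorial] at this
    rw [lt_log_iff_exp_lt hcosh]
    linarith
  have hrest : 1.28 * tanh 1.28 - 1.28 ^ 2 * (1 / cosh 1.28) ^ 2 ≤ (0.6598 : ℝ) := by
    rw [tanh_eq_sinh_div_cosh, ← sub_nonneg]
    have : 0 ≤ (0.6598 * cosh 1.28 ^ 2 - 1.28 * sinh 1.28 * cosh 1.28 + 1.28 ^ 2) /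
        cosh 1.28 ^ 2 := div_nonneg (by nlinarith) (by positivity)
    convert this using 1
    field_simp
    ring
  unfold gDerivNum
  linarith

lemma gDerivNum_1_29_pos : 0 < gDerivNum 1.29 := by
  obtain ⟨hc₁, hc₂, hs₁, hs₂⟩ := cosh_sinh_1_29_bounds
  have hcosh := cosh_pos 1.29
  have hlog : log (cosh 1.29) < 0.6724 := by
    have := sum_le_exp_of_nonneg (x := 0.6724) (by norm_num) 12
    norm_num [Finset.sum_range_succ, Nat.factorial] at this
    rw [log_lt_iff_lt_exp hcosh]
    linarith
  have hrest : (0.6724 : ℝ) ≤ 1.29 * tanh 1.29 - 1.29 ^ 2 * (1 / cosh 1.29) ^ 2 := by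
    rw [tanh_eq_sinh_div_cosh, ← sub_nonneg]
    have : 0 ≤ (1.29 * sinh 1.29 * cosh 1.29 - 1.29 ^ 2 - 0.6724 * cosh 1.29 ^ 2) /
        cosh 1.29 ^ 2 := div_nonneg (by nlinarith) (by positivity)
    convert this using 1
    field_simp
  unfold gDerivNum
  linarith

lemma half_lt_mul_tanh_1_29 : 1 / 2 < 1.29 * tanh 1.29 := by
  obtain ⟨hc₁, hc₂, hs₁, hs₂⟩ := cosh_sinh_1_29_bounds
  rw [tanh_eq_sinh_div_cosh, mul_div_assoc', lt_div_iff₀ (cosh_pos _)]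
  linarith

lemma exists_mul_tanh_eq_half : ∃ a, 0 < a ∧ a * tanh a = 1 / 2 := by
  obtain ⟨a, ha, ha'⟩ := intermediate_value_Ioo (show (0 : ℝ) ≤ 1.29 by norm_num)
    (f := fun y => y * tanh y) (continuous_id.mul continuous_tanh).continuousOn
    ⟨by norm_num, half_lt_mul_tanh_1_29⟩
  exact ⟨a, ha.1, ha'⟩

lemma exists_gDerivNum_eq_zero : ∃ c ∈ Ioo (1.28 : ℝ) 1.29, gDerivNum c = 0 :=
  intermediate_value_Ioo (by norm_num)
    (continuous_iff_continuousAt.2 fun x => (hasDerivAt_gDerivNum x).continuousAt).continuousOn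
    ⟨gDerivNum_1_28_neg, gDerivNum_1_29_pos⟩

/-- Properties of `g(y) = (ln cosh y)/y − tanh y` on `(0,∞)`: it is negative, strictly
decreasing on `(0,c)` and strictly increasing on `(c,∞)` where `c ≈ 1.28377` is the
unique positive critical point, and it tends to `0` at `0⁺` and at `∞`. -/
theorem g_properties :
    ∃ c : ℝ, c ∈ Set.Ioo (1.28 : ℝ) 1.29 ∧
      (∀ y : ℝ, 0 < y →
        (Real.tanh y / y - Real.log (Real.cosh y) / y ^ 2 - (1 / Real.cosh y) ^ 2 = 0
          ↔ y = c)) ∧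
      (∀ y : ℝ, 0 < y → Real.log (Real.cosh y) / y - Real.tanh y < 0) ∧
      StrictAntiOn (fun y : ℝ => Real.log (Real.cosh y) / y - Real.tanh y)
        (Set.Ioo 0 c) ∧
      StrictMonoOn (fun y : ℝ => Real.log (Real.cosh y) / y - Real.tanh y)
        (Set.Ioi c) ∧
      Tendsto (fun y : ℝ => Real.log (Real.cosh y) / y - Real.tanh y)
        (nhdsWithin 0 (Set.Ioi 0)) (nhds 0) ∧
      Tendsto (fun y : ℝ => Real.log (Real.cosh y) / y - Real.tanh y)
        atTop (nhds 0) := by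
  obtain ⟨a, ha0, ha⟩ := exists_mul_tanh_eq_half
  obtain ⟨c, hc, hgc⟩ := exists_gDerivNum_eq_zero
  have hc0 : 0 < c := lt_trans (by norm_num) hc.1
  obtain ⟨hneg, hpos⟩ := neg_on_Ioo_and_pos_on_Ioi_of_strictAntiOn_of_strictMonoOn ha0.le hc0
    gDerivNum_zero hgc (strictAntiOn_gDerivNum ha) (strictMonoOn_gDerivNum ha0.le ha)
  refine ⟨c, hc, fun y hy => ?_, fun y => g_neg,
    strictAntiOn_g (convex_Ioo 0 c) Ioo_subset_Ioi_self (by simpa using hneg),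
    strictMonoOn_g (convex_Ioi c) (Ioi_subset_Ioi hc0.le) (by simpa using hpos),
    tendsto_g_nhdsGT_zero, tendsto_g_atTop⟩
  rw [← gDerivNum_div_sq hy.ne', div_eq_zero_iff, or_iff_left (pow_ne_zero 2 hy.ne')]
  refine ⟨fun h => ?_, fun h => h ▸ hgc⟩
  rcases lt_trichotomy y c with hyc | hyc | hcy
  · exact absurd h (hneg y ⟨hy, hyc⟩).ne
  · exact hyc
  · exact absurd h (hpos y hcy).ne'
end
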